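/- Let p > 3 be a prime and b ≥ 2 an integer. If there exists an integer u with f_p(u, p^{b-1}) = p, then p ≡ 1 (mod 12). -/

import Mathlib

/-!
Write `y = p ^ (b - 1)` and `N = (p - 1) / 2`. Modulo `3` every term of `f_p(u, y)` but the last
carries a factor `3`, so `p = f_p(u, y) ≡ (-2) ^ N * y ^ (p - 1) ≡ 1`. Modulo `y ^ 2`, hence modulo
`p ^ 2` as `b ≥ 2`, only the first term `p * 3 ^ N * u ^ (p - 1)` survives, so
`3 ^ N * u ^ (p - 1) ≡ 1 (mod p)`: thus `p ∤ u`, `3 ^ N ≡ 1`, and `3` is a square mod `p` by Euler's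
criterion. As `p ≡ 1 (mod 3)` is a square mod `3`, quadratic reciprocity rules out `p ≡ 3 (mod 4)`.
-/

/-- The polynomial `f_n(X,Y) = Σ_{i=0}^{(n-1)/2} C(n,2i+1)·(-2)^i·3^((n-1)/2-i)·X^(n-1-2i)·Y^(2i)`
evaluated at integers. -/
def fpoly (n : ℕ) (x y : ℤ) : ℤ :=
  ∑ i ∈ Finset.range ((n - 1) / 2 + 1),
    (n.choose (2 * i + 1) : ℤ) * (-2) ^ i * 3 ^ ((n - 1) / 2 - i) *
      x ^ (n - 1 - 2 * i) * y ^ (2 * i)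

theorem fpoly_modEq_three {n : ℕ} (hn : Odd n) (x y : ℤ) :
    fpoly n x y ≡ y ^ (n - 1) [ZMOD 3] := by
  obtain ⟨N, rfl⟩ := hn
  have hN : (2 * N + 1 - 1) / 2 = N := by omega
  refine (ZMod.intCast_eq_intCast_iff _ _ 3).mp ?_
  rw [fpoly, hN, Finset.sum_range_succ]
  push_cast
  have h3 : (3 : ZMod 3) = 0 := rfl
  have hneg2 : (-2 : ZMod 3) = 1 := rfl
  rw [Finset.sum_eq_zero fun i hi => by
    rw [h3, zero_pow (by have := Finset.mem_range.mp hi; omega), mul_zero, zero_mul, zero_mul]]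
  simp [hneg2]

theorem fpoly_modEq_sq (n : ℕ) (x y : ℤ) :
    fpoly n x y ≡ n * 3 ^ ((n - 1) / 2) * x ^ (n - 1) [ZMOD y ^ 2] := by
  rw [fpoly, Finset.sum_range_succ']
  refine Int.ModEq.symm (Int.modEq_iff_dvd.mpr ?_)
  simp only [mul_zero, zero_add, Nat.choose_one_right, pow_zero, mul_one, tsub_zero, add_sub_cancel_right]
  refine Finset.dvd_sum fun i _ => Dvd.dvd.mul_left ?_ _
  exact pow_dvd_pow _ (by omega)

theorem mod_three_eq_one_of_fpoly_eq {p : ℕ} (hp : p.Prime) (hp3 : 3 < p) {u : ℤ} {k : ℕ}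
    (hu : fpoly p u ((p : ℤ) ^ k) = p) : p % 3 = 1 := by
  have hodd : Odd p := hp.odd_of_ne_two (by omega)
  have hmod := (ZMod.intCast_eq_intCast_iff _ _ 3).mpr (hu ▸ fpoly_modEq_three hodd u _)
  push_cast at hmod
  have hp0 : (p : ZMod 3) ≠ 0 := by
    rw [Ne, ZMod.natCast_eq_zero_iff, Nat.dvd_prime hp]
    omega
  have hpow : p - 1 = 2 * (p / 2) := by have := Nat.odd_iff.mp hodd; omega
  rw [hpow, pow_mul, ZMod.pow_card_sub_one_eq_one (pow_ne_zero _ hp0), one_pow] at hmod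
  exact (ZMod.natCast_eq_natCast_iff' p 1 3).mp (by simpa using hmod)

theorem isSquare_three_of_fpoly_eq {p : ℕ} [Fact p.Prime] (hp3 : 3 < p) {u : ℤ} {k : ℕ}
    (hk : 1 ≤ k) (hu : fpoly p u ((p : ℤ) ^ k) = p) : IsSquare (3 : ZMod p) := by
  have hp0 : (p : ℤ) ≠ 0 := by exact_mod_cast (Fact.out : p.Prime).ne_zero
  have hsq : (p : ℤ) ^ 2 ∣ ((p : ℤ) ^ k) ^ 2 := pow_dvd_pow_of_dvd (dvd_pow_self _ (by omega)) 2
  have hdvd : (p : ℤ) * p ∣ p * (3 ^ ((p - 1) / 2) * u ^ (p - 1) - 1) := by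
    have := ((hu ▸ fpoly_modEq_sq p u ((p : ℤ) ^ k)).of_dvd hsq).dvd
    rwa [sq, show (p : ℤ) * 3 ^ ((p - 1) / 2) * u ^ (p - 1) - p
      = p * (3 ^ ((p - 1) / 2) * u ^ (p - 1) - 1) by ring] at this
  have hone : (3 : ZMod p) ^ ((p - 1) / 2) * (u : ZMod p) ^ (p - 1) = 1 := by
    have := (ZMod.intCast_zmod_eq_zero_iff_dvd _ p).mpr ((mul_dvd_mul_iff_left hp0).mp hdvd)
    push_cast at this
    exact sub_eq_zero.mp this
  have hu0 : (u : ZMod p) ≠ 0 := by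
    intro h
    rw [h, zero_pow (by omega), mul_zero] at hone
    exact zero_ne_one hone
  have h30 : ((3 : ℕ) : ZMod p) ≠ 0 := by
    rw [Ne, ZMod.natCast_eq_zero_iff]
    exact fun h => absurd (Nat.le_of_dvd three_pos h) (by omega)
  have hhalf : (p - 1) / 2 = p / 2 := by
    have := (Fact.out : p.Prime).mod_two_eq_one_iff_ne_two.mpr (by omega)
    omega
  rw [ZMod.pow_card_sub_one_eq_one hu0, mul_one, hhalf] at hone
  exact (ZMod.euler_criterion p (by exact_mod_cast h30)).mpr hone

theorem mod_four_eq_one_of_isSquare_three {p : ℕ} [Fact p.Prime] (h3 : p % 3 = 1)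
    (hsq : IsSquare (3 : ZMod p)) : p % 4 = 1 := by
  have hodd : p % 2 = 1 := (Fact.out : p.Prime).mod_two_eq_one_iff_ne_two.mpr (by omega)
  by_contra h4
  have h43 : p % 4 = 3 := by omega
  have hnot := (ZMod.exists_sq_eq_prime_iff_of_mod_four_eq_three (q := 3) h43 rfl (by omega)).mp
    (by exact_mod_cast hsq)
  have hp1 : (p : ZMod 3) = 1 := by simpa using (ZMod.natCast_eq_natCast_iff' p 1 3).mpr h3
  exact hnot (hp1 ▸ IsSquare.one)

/-- If `p > 3` is a prime, `b ≥ 2`, and `f_p(u, p^(b-1)) = p` has an integer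
solution `u`, then `p ≡ 1 (mod 12)`. -/
theorem stmt12 (p : ℕ) (hp : p.Prime) (hp3 : 3 < p) (b : ℕ) (hb : 2 ≤ b)
    (hsol : ∃ u : ℤ, fpoly p u ((p : ℤ) ^ (b - 1)) = p) :
    p ≡ 1 [MOD 12] := by
  have := Fact.mk hp
  obtain ⟨u, hu⟩ := hsol
  have h3 : p % 3 = 1 := mod_three_eq_one_of_fpoly_eq hp hp3 hu
  have h4 : p % 4 = 1 :=
    mod_four_eq_one_of_isSquare_three h3 (isSquare_three_of_fpoly_eq hp3 (by omega) hu)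
  unfold Nat.ModEq
  omega
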